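/- arXiv:2403.18977 — 3 statements merged into one kernel-verified Lean document; each statement's English description precedes it below -/
import Mathlib

section
/- Let A, B : ℝ → M_d(ℂ) solve A' = iB − [R, A], B' = iQ(t)A − [R, B] with R skew-symmetric, Q(t) symmetric, and suppose the initial data satisfy A₀*B₀ + B₀*A₀ = 2·Id. Then for every t, both A(t) and B(t) are invertible. -/
open Matrix

lemma hasDerivAt_normSq' {f : ℝ → ℂ} {f' : ℂ} {t : ℝ} (hf : HasDerivAt f f' t) :
    HasDerivAt (fun s => Complex.normSq (f s)) ((star (f t) * f' + f t * star f').re) t := by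
  have hre : HasDerivAt (fun s => (f s).re) (Complex.reCLM f') t :=
    Complex.reCLM.hasFDerivAt.comp_hasDerivAt t hf
  have him : HasDerivAt (fun s => (f s).im) (Complex.imCLM f') t :=
    Complex.imCLM.hasFDerivAt.comp_hasDerivAt t hf
  have h := (hre.fun_mul hre).fun_add (him.fun_mul him)
  have heq : (fun s => Complex.normSq (f s))
      = fun s => (f s).re * (f s).re + (f s).im * (f s).im :=
    funext fun s => by simp [Complex.normSq_apply]
  rw [heq]
  refine h.congr_deriv ?_
  simp [Complex.add_re, Complex.mul_re, Complex.mul_im]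
  ring

open scoped ComplexOrder in
lemma isUnit_of_polar {d : ℕ} (A B : Matrix (Fin d) (Fin d) ℂ)
    (h : Aᴴ * B + Bᴴ * A = (2 : ℂ) • (1 : Matrix (Fin d) (Fin d) ℂ)) :
    IsUnit A ∧ IsUnit B := by
  have key : ∀ (M N : Matrix (Fin d) (Fin d) ℂ),
      Mᴴ * N + Nᴴ * M = (2 : ℂ) • 1 → IsUnit M := by
    intro M N hMN
    rw [Matrix.isUnit_iff_isUnit_det]
    rw [isUnit_iff_ne_zero]
    intro hdet
    obtain ⟨v, hv, hMv⟩ := (Matrix.exists_mulVec_eq_zero_iff).2 hdet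
    have hkey := congrArg (fun X => star v ⬝ᵥ X.mulVec v) hMN
    simp only [Matrix.add_mulVec, dotProduct_add, ← Matrix.mulVec_mulVec,
      Matrix.smul_mulVec, Matrix.one_mulVec] at hkey
    rw [Matrix.dotProduct_mulVec (star v) (Mᴴ), Matrix.dotProduct_mulVec (star v) (Nᴴ),
      ← Matrix.star_mulVec, ← Matrix.star_mulVec, hMv] at hkey
    simp only [star_zero, zero_dotProduct, dotProduct_zero, add_zero,
      zero_add, dotProduct_smul, smul_eq_mul] at hkey
    have h2 : (2:ℂ) * (star v ⬝ᵥ v) = 0 := hkey.symm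
    have hvz : star v ⬝ᵥ v = 0 := by
      rcases mul_eq_zero.mp h2 with h' | h'
      · exact absurd h' two_ne_zero
      · exact h'
    exact hv (dotProduct_star_self_eq_zero.mp hvz)
  refine ⟨key A B h, key B A ?_⟩
  rw [← h]; abel

/-- If `A, B` solve the rotating Hagedorn system and `A₀*B₀ + B₀*A₀ = 2·Id`, then
`A(t)` and `B(t)` are invertible for every `t`. -/
theorem hagedorn_invertibility (d : ℕ)
    (A B : ℝ → Matrix (Fin d) (Fin d) ℂ)
    (R : Matrix (Fin d) (Fin d) ℝ) (hR : Rᵀ = -R)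
    (Q : ℝ → Matrix (Fin d) (Fin d) ℝ) (hQ : ∀ t, (Q t)ᵀ = Q t)
    (hA : ∀ t i j, HasDerivAt (fun s => A s i j)
      ((Complex.I • B t
        - (R.map Complex.ofReal * A t - A t * R.map Complex.ofReal)) i j) t)
    (hB : ∀ t i j, HasDerivAt (fun s => B s i j)
      ((Complex.I • ((Q t).map Complex.ofReal * A t)
        - (R.map Complex.ofReal * B t - B t * R.map Complex.ofReal)) i j) t)
    (h0 : (A 0)ᴴ * B 0 + (B 0)ᴴ * A 0 = (2 : ℂ) • (1 : Matrix (Fin d) (Fin d) ℂ)) :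
    ∀ t, IsUnit (A t) ∧ IsUnit (B t) := by
  classical
  set Rc := R.map (Complex.ofReal) with hRcdef
  have hRcH : Rcᴴ = -Rc := by
    ext i j
    have h1 : R j i = -R i j := by
      have := congrFun (congrFun hR i) j
      simpa [Matrix.transpose_apply, Matrix.neg_apply] using this
    simp [hRcdef, Matrix.conjTranspose_apply, Matrix.map_apply, Matrix.neg_apply, h1]
  have hQcH : ∀ t, ((Q t).map (Complex.ofReal : ℝ → ℂ))ᴴ = (Q t).map Complex.ofReal := by
    intro t; ext i j
    have h1 : Q t j i = Q t i j := by
      have := congrFun (congrFun (hQ t) i) j; simpa using this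
    simp [Matrix.conjTranspose_apply, Matrix.map_apply, h1]
  set F : ℝ → Matrix (Fin d) (Fin d) ℂ := fun s => (A s)ᴴ * B s + (B s)ᴴ * A s with hFdef
  set G : ℝ → Matrix (Fin d) (Fin d) ℂ := fun s => F s - (2:ℂ) • 1 with hGdef
  set D : ℝ → Matrix (Fin d) (Fin d) ℂ := fun t => F t * Rc - Rc * F t with hDdef
  set A' : ℝ → Matrix (Fin d) (Fin d) ℂ :=
    fun t => Complex.I • B t - (Rc * A t - A t * Rc) with hA'def
  set B' : ℝ → Matrix (Fin d) (Fin d) ℂ :=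
    fun t => Complex.I • ((Q t).map Complex.ofReal * A t) - (Rc * B t - B t * Rc) with hB'def
  -- matrix identity for the would-be derivative of F
  have hED : ∀ t, (A' t)ᴴ * B t + (A t)ᴴ * B' t + (B' t)ᴴ * A t + (B t)ᴴ * A' t = D t := by
    intro t
    simp only [hA'def, hB'def, hDdef, hFdef, Matrix.conjTranspose_sub, Matrix.conjTranspose_smul,
      Matrix.conjTranspose_mul, hRcH, hQcH, Complex.star_def, Complex.conj_I,
      Matrix.sub_mul, Matrix.mul_sub, Matrix.add_mul, Matrix.mul_add,
      Matrix.smul_mul, Matrix.mul_smul, Matrix.neg_mul, Matrix.mul_neg,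
      Matrix.mul_assoc, neg_smul, smul_sub]
    abel
  -- entrywise derivative of F
  have hFderiv : ∀ t i j, HasDerivAt (fun s => F s i j) (D t i j) t := by
    intro t i j
    have h1 : HasDerivAt (fun s => ∑ k, star (A s k i) * B s k j)
        (∑ k, (star (A' t k i) * B t k j + star (A t k i) * B' t k j)) t :=
      HasDerivAt.fun_sum fun k _ => ((hA t k i).star.fun_mul (hB t k j))
    have h2 : HasDerivAt (fun s => ∑ k, star (B s k i) * A s k j)
        (∑ k, (star (B' t k i) * A t k j + star (B t k i) * A' t k j)) t :=
      HasDerivAt.fun_sum fun k _ => ((hB t k i).star.fun_mul (hA t k j))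
    have h := h1.fun_add h2
    have heq : (fun s => F s i j)
        = fun s => (∑ k, star (A s k i) * B s k j) + ∑ k, star (B s k i) * A s k j :=
      funext fun s => by
        simp [hFdef, Matrix.add_apply, Matrix.mul_apply, Matrix.conjTranspose_apply]
    rw [heq]
    refine h.congr_deriv ?_
    rw [← hED t]
    simp only [Matrix.add_apply, Matrix.mul_apply, Matrix.conjTranspose_apply,
      Finset.sum_add_distrib]
    abel
  -- entrywise derivative of G
  have hGderiv : ∀ t i j, HasDerivAt (fun s => G s i j) (D t i j) t := by
    intro t i j
    have := (hFderiv t i j).sub_const (((2:ℂ) • (1 : Matrix (Fin d) (Fin d) ℂ)) i j)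
    simpa [hGdef, Matrix.sub_apply] using this
  have hGH : ∀ t, (G t)ᴴ = G t := by
    intro t
    simp only [hGdef, hFdef, Matrix.conjTranspose_sub, Matrix.conjTranspose_add,
      Matrix.conjTranspose_mul, Matrix.conjTranspose_smul, Matrix.conjTranspose_conjTranspose,
      Matrix.conjTranspose_one, Complex.star_def, map_ofNat]
    abel_nf
  have hDG : ∀ t, D t = G t * Rc - Rc * G t := by
    intro t
    simp only [hDdef, hGdef, Matrix.sub_mul, Matrix.mul_sub, Matrix.smul_mul, Matrix.mul_smul,
      Matrix.one_mul, Matrix.mul_one]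
    abel
  have hDH : ∀ t, (D t)ᴴ = D t := by
    intro t
    rw [hDG t]
    simp only [Matrix.conjTranspose_sub, Matrix.conjTranspose_mul, hRcH, hGH,
      Matrix.neg_mul, Matrix.mul_neg]
    abel
  -- trace identity
  have htr : ∀ t, Matrix.trace ((G t)ᴴ * D t) + Matrix.trace ((D t)ᴴ * G t) = 0 := by
    intro t
    rw [hGH t, hDH t, ← Matrix.trace_add]
    have : G t * D t + D t * G t = (G t * G t) * Rc - Rc * (G t * G t) := by
      rw [hDG t]; noncomm_ring
    rw [this, Matrix.trace_sub, Matrix.trace_mul_comm, sub_self]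
  -- the Lyapunov function
  set φ : ℝ → ℝ := fun s => ∑ i, ∑ j, Complex.normSq (G s i j) with hφdef
  have hφderiv : ∀ t, HasDerivAt φ 0 t := by
    intro t
    have h : HasDerivAt φ
        (∑ i, ∑ j, ((star (G t i j) * D t i j + G t i j * star (D t i j)).re)) t :=
      HasDerivAt.fun_sum fun i _ => HasDerivAt.fun_sum fun j _ => hasDerivAt_normSq' (hGderiv t i j)
    convert h using 1
    have : (∑ i, ∑ j, (star (G t i j) * D t i j + G t i j * star (D t i j)))
        = Matrix.trace ((G t)ᴴ * D t) + Matrix.trace ((D t)ᴴ * G t) := by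
      rw [Matrix.trace, Matrix.trace]
      simp only [Matrix.diag_apply, Matrix.mul_apply, Matrix.conjTranspose_apply]
      rw [← Finset.sum_add_distrib]
      rw [Finset.sum_comm (γ := Fin d)]
      congr 1; ext i; rw [← Finset.sum_add_distrib]; congr 1; ext j; ring
    calc (0:ℝ) = (Matrix.trace ((G t)ᴴ * D t) + Matrix.trace ((D t)ᴴ * G t)).re := by
          rw [htr t]; simp
      _ = _ := by rw [← this]; simp [Complex.re_sum]
  have hφ0 : φ 0 = 0 := by
    have hG0 : G 0 = 0 := by
      rw [hGdef]; simp only [hFdef]; rw [sub_eq_zero]; exact h0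
    simp [hφdef, hG0]
  have hφconst : ∀ t, φ t = 0 := by
    intro t
    have hd : Differentiable ℝ φ := fun s => (hφderiv s).differentiableAt
    have := is_const_of_deriv_eq_zero hd (fun s => (hφderiv s).deriv) t 0
    rw [this, hφ0]
  -- conclude F t = 2•1
  intro t
  have hGt : G t = 0 := by
    have hsum := hφconst t
    ext i j
    have hij : Complex.normSq (G t i j) = 0 := by
      have h1 : ∀ i ∈ Finset.univ, (0:ℝ) ≤ ∑ j, Complex.normSq (G t i j) :=
        fun i _ => Finset.sum_nonneg fun j _ => Complex.normSq_nonneg _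
      have h2 := (Finset.sum_eq_zero_iff_of_nonneg h1).1 hsum i (Finset.mem_univ i)
      have h3 : ∀ j ∈ Finset.univ, (0:ℝ) ≤ Complex.normSq (G t i j) :=
        fun j _ => Complex.normSq_nonneg _
      exact (Finset.sum_eq_zero_iff_of_nonneg h3).1 h2 j (Finset.mem_univ j)
    simpa [Complex.normSq_eq_zero] using hij
  have hFt : (A t)ᴴ * B t + (B t)ᴴ * A t = (2:ℂ) • 1 := by
    have := hGt; rw [hGdef, sub_eq_zero] at this; exact this
  exact isUnit_of_polar (A t) (B t) hFt
end

section
/- Under the Hagedorn conditions, symmetry of BA⁻¹ is propagated: if A, B solve A' = iB − [R, A], B' = iQ(t)A − [R, B] with R skew-symmetric, Q(t) symmetric, A(t) invertible for all t, and A₀ᵀB₀ = B₀ᵀA₀, then B(t)A(t)⁻¹ is a symmetric matrix for all t. -/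
/-!
Along the flow, `G = AᵀB - BᵀA` solves the linear equation `G' = G R - R G`: the terms coming
from `i B` and `i Q A` cancel because `Q` is symmetric, and those coming from the commutators
with `R` combine to `[G, R]` because `R` is skew-symmetric. Hence `exp (t R) G(t) exp (-t R)` is
constant, so `G` vanishes identically once it vanishes at `0`, and `AᵀB = BᵀA` with `A`
invertible says exactly that `B A⁻¹` is symmetric.
-/

open Matrix NormedSpace

attribute [local instance] Matrix.linftyOpNormedAddCommGroup Matrix.linftyOpNormedSpace
  Matrix.linftyOpNormedRing Matrix.linftyOpNormedAlgebra

section Commutator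

variable {𝔸 : Type*} [NormedRing 𝔸] [NormedAlgebra ℝ 𝔸] [CompleteSpace 𝔸]

theorem exp_smul_mul_mul_exp_smul_neg_eq_of_hasDerivAt_commutator {G : ℝ → 𝔸} {X : 𝔸}
    (hG : ∀ t, HasDerivAt G (G t * X - X * G t) t) (t : ℝ) :
    exp (t • X) * G t * exp (t • -X) = G 0 := by
  have hW : ∀ s, HasDerivAt (fun u => exp (u • X) * G u * exp (u • -X)) 0 s := by
    intro s
    refine (((hasDerivAt_exp_smul_const X s).mul (hG s)).mul
      (hasDerivAt_exp_smul_const' (-X) s)).congr_deriv ?_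
    simp only [Pi.mul_apply]
    noncomm_ring
  simpa using is_const_of_deriv_eq_zero (fun s => (hW s).differentiableAt)
    (fun s => (hW s).deriv) t 0

theorem eq_zero_of_hasDerivAt_commutator {G : ℝ → 𝔸} {X : 𝔸}
    (hG : ∀ t, HasDerivAt G (G t * X - X * G t) t) (h0 : G 0 = 0) (t : ℝ) : G t = 0 := by
  have h := exp_smul_mul_mul_exp_smul_neg_eq_of_hasDerivAt_commutator hG t
  have exp_isUnit (x : 𝔸) : IsUnit (exp x) :=
    isUnit_exp_of_mem_ball (𝕂 := ℝ) ((expSeries_radius_eq_top ℝ 𝔸).symm ▸ edist_lt_top _ _)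
  rwa [h0, (exp_isUnit _).mul_left_eq_zero, (exp_isUnit _).mul_right_eq_zero] at h

end Commutator

section MatrixCalculus

variable {𝕜 : Type*} [RCLike 𝕜] {m n : Type*} [Fintype m] [Fintype n]

theorem hasDerivAt_matrix_of_entries {f : ℝ → Matrix m n 𝕜} {f' : Matrix m n 𝕜} {t : ℝ}
    (h : ∀ i j, HasDerivAt (fun s => f s i j) (f' i j) t) : HasDerivAt f f' t := by
  classical
  have hsum : HasDerivAt (fun s => ∑ i, ∑ j, f s i j • single i j (1 : 𝕜))
      (∑ i, ∑ j, f' i j • single i j (1 : 𝕜)) t :=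
    .fun_sum fun i _ => .fun_sum fun j _ => (h i j).smul_const _
  simpa only [smul_single, smul_eq_mul, mul_one, ← matrix_eq_sum_single] using hsum

theorem HasDerivAt.matrix_transpose {f : ℝ → Matrix m n 𝕜} {f' : Matrix m n 𝕜} {t : ℝ}
    (h : HasDerivAt f f' t) : HasDerivAt (fun s => (f s)ᵀ) f'ᵀ t :=
  (transposeLinearEquiv m n ℝ 𝕜).toLinearMap.toContinuousLinearMap.hasFDerivAt.comp_hasDerivAt t h

theorem hasDerivAt_transpose_mul_sub_transpose_mul [DecidableEq n] {A B : ℝ → Matrix n n 𝕜}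
    {R S : Matrix n n 𝕜} {c : 𝕜} {t : ℝ} (hR : Rᵀ = -R) (hS : Sᵀ = S)
    (hA : HasDerivAt A (c • B t - (R * A t - A t * R)) t)
    (hB : HasDerivAt B (c • (S * A t) - (R * B t - B t * R)) t) :
    HasDerivAt (fun s => (A s)ᵀ * B s - (B s)ᵀ * A s)
      (((A t)ᵀ * B t - (B t)ᵀ * A t) * R - R * ((A t)ᵀ * B t - (B t)ᵀ * A t)) t := by
  refine ((hA.matrix_transpose.mul hB).sub (hB.matrix_transpose.mul hA)).congr_deriv ?_
  simp only [transpose_sub, transpose_smul, transpose_mul, hR, hS, mul_sub, sub_mul, neg_mul,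
    mul_neg, smul_mul_assoc, mul_smul_comm, Matrix.mul_assoc]
  abel

end MatrixCalculus

theorem Matrix.isSymm_mul_nonsing_inv_of_transpose_mul_eq {n α : Type*} [Fintype n]
    [DecidableEq n] [CommRing α] {A B : Matrix n n α} (hA : IsUnit A.det)
    (h : Aᵀ * B = Bᵀ * A) : (B * A⁻¹).IsSymm := by
  have hAt : IsUnit Aᵀ.det := by rwa [det_transpose]
  calc (B * A⁻¹)ᵀ = Aᵀ⁻¹ * (Bᵀ * A * A⁻¹) := by
        rw [transpose_mul, transpose_nonsing_inv, mul_nonsing_inv_cancel_right _ _ hA]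
    _ = B * A⁻¹ := by
        rw [← h, Matrix.mul_assoc, nonsing_inv_mul_cancel_left _ _ hAt]

/-- Propagation of symmetry: if `A, B` solve the rotating Hagedorn system, `A(t)` is
invertible for all `t`, and `A₀ᵀB₀ = B₀ᵀA₀`, then `B(t)A(t)⁻¹` is symmetric for all `t`. -/
theorem hagedorn_symmetry_propagation (d : ℕ)
    (A B : ℝ → Matrix (Fin d) (Fin d) ℂ)
    (R : Matrix (Fin d) (Fin d) ℝ) (hR : Rᵀ = -R)
    (Q : ℝ → Matrix (Fin d) (Fin d) ℝ) (hQ : ∀ t, (Q t)ᵀ = Q t)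
    (hA : ∀ t i j, HasDerivAt (fun s => A s i j)
      ((Complex.I • B t
        - (R.map Complex.ofReal * A t - A t * R.map Complex.ofReal)) i j) t)
    (hB : ∀ t i j, HasDerivAt (fun s => B s i j)
      ((Complex.I • ((Q t).map Complex.ofReal * A t)
        - (R.map Complex.ofReal * B t - B t * R.map Complex.ofReal)) i j) t)
    (hInv : ∀ t, IsUnit (A t).det)
    (hSym0 : (A 0)ᵀ * B 0 = (B 0)ᵀ * A 0) :
    ∀ t, (B t * (A t)⁻¹)ᵀ = B t * (A t)⁻¹ := by
  have hRℂ : (R.map Complex.ofReal)ᵀ = -R.map Complex.ofReal := by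
    rw [← transpose_map, hR, Matrix.map_neg _ Complex.ofReal_neg]
  have hQℂ (t : ℝ) : ((Q t).map Complex.ofReal)ᵀ = (Q t).map Complex.ofReal := by
    rw [← transpose_map, hQ t]
  have hG (t : ℝ) := hasDerivAt_transpose_mul_sub_transpose_mul hRℂ (hQℂ t)
    (hasDerivAt_matrix_of_entries (hA t)) (hasDerivAt_matrix_of_entries (hB t))
  intro t
  refine isSymm_mul_nonsing_inv_of_transpose_mul_eq (hInv t) (sub_eq_zero.mp ?_)
  exact eq_zero_of_hasDerivAt_commutator hG (sub_eq_zero.mpr hSym0) t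
end

section
/- Under the Hagedorn conditions, positivity is propagated: if A, B solve the ODE system A' = iB − [R, A], B' = iQ(t)A − [R, B] with R skew-symmetric, Q(t) symmetric, A(t) invertible, and A₀*B₀ + B₀*A₀ = 2·Id, then Re(B(t)A(t)⁻¹) = (A(t)A(t)*)⁻¹ for all t; in particular Re(B(t)A(t)⁻¹) is positive definite. -/
open Matrix
open scoped ComplexOrder

attribute [local instance] Matrix.linftyOpSemiNormedRing Matrix.linftyOpNormedRing
  Matrix.linftyOpNormedAlgebra

private lemma entry_hasDerivAt {d : ℕ} {f : ℝ → Matrix (Fin d) (Fin d) ℂ}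
    {f' : Matrix (Fin d) (Fin d) ℂ} {t : ℝ} (h : HasDerivAt f f' t) (i j : Fin d) :
    HasDerivAt (fun s => f s i j) (f' i j) t := by
  let L : Matrix (Fin d) (Fin d) ℂ →ₗ[ℂ] ℂ :=
    { toFun := fun M => M i j, map_add' := fun _ _ => rfl, map_smul' := fun _ _ => rfl }
  have := ((LinearMap.toContinuousLinearMap L).restrictScalars ℝ).hasFDerivAt.comp_hasDerivAt t h
  exact this

private lemma matrix_hasDerivAt {d : ℕ} {f : ℝ → Matrix (Fin d) (Fin d) ℂ}
    {f' : Matrix (Fin d) (Fin d) ℂ} {t : ℝ}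
    (h : ∀ i j, HasDerivAt (fun s => f s i j) (f' i j) t) :
    HasDerivAt f f' t := by
  have h1 : HasDerivAt
      (fun s => ∑ i : Fin d, ∑ j : Fin d, f s i j • Matrix.single i j (1 : ℂ))
      (∑ i : Fin d, ∑ j : Fin d, f' i j • Matrix.single i j (1 : ℂ)) t :=
    HasDerivAt.fun_sum fun i _ => HasDerivAt.fun_sum fun j _ => (h i j).smul_const _
  simpa only [Matrix.smul_single, smul_eq_mul, mul_one,
    ← Matrix.matrix_eq_sum_single] using h1

private lemma matrix_hasDerivAt_conjTranspose {d : ℕ} {f : ℝ → Matrix (Fin d) (Fin d) ℂ}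
    {f' : Matrix (Fin d) (Fin d) ℂ} {t : ℝ} (h : HasDerivAt f f' t) :
    HasDerivAt (fun s => (f s)ᴴ) f'ᴴ t :=
  matrix_hasDerivAt fun i j => by
    simpa [Matrix.conjTranspose_apply] using (entry_hasDerivAt h j i).star

/-- Propagation of positivity: if `A, B` solve the rotating Hagedorn system, `A(t)` is
invertible, and `A₀*B₀ + B₀*A₀ = 2·Id`, then `Re(B(t)A(t)⁻¹) = (A(t)A(t)*)⁻¹` for all `t`;
in particular `Re(B(t)A(t)⁻¹)` is positive definite. -/
theorem hagedorn_positivity_propagation (d : ℕ)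
    (A B : ℝ → Matrix (Fin d) (Fin d) ℂ)
    (R : Matrix (Fin d) (Fin d) ℝ) (hR : Rᵀ = -R)
    (Q : ℝ → Matrix (Fin d) (Fin d) ℝ) (hQ : ∀ t, (Q t)ᵀ = Q t)
    (hA : ∀ t i j, HasDerivAt (fun s => A s i j)
      ((Complex.I • B t
        - (R.map Complex.ofReal * A t - A t * R.map Complex.ofReal)) i j) t)
    (hB : ∀ t i j, HasDerivAt (fun s => B s i j)
      ((Complex.I • ((Q t).map Complex.ofReal * A t)
        - (R.map Complex.ofReal * B t - B t * R.map Complex.ofReal)) i j) t)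
    (hInv : ∀ t, IsUnit (A t).det)
    (h0 : (A 0)ᴴ * B 0 + (B 0)ᴴ * A 0 = (2 : ℂ) • (1 : Matrix (Fin d) (Fin d) ℂ)) :
    ∀ t, ((1 / 2 : ℂ) • (B t * (A t)⁻¹ + (B t * (A t)⁻¹)ᴴ) = (A t * (A t)ᴴ)⁻¹) ∧
      ((1 / 2 : ℂ) • (B t * (A t)⁻¹ + (B t * (A t)⁻¹)ᴴ)).PosDef := by
  intro t
  set Rc : Matrix (Fin d) (Fin d) ℂ := R.map Complex.ofReal with hRcdef
  have hRc : Rcᴴ = -Rc := by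
    ext i j
    have h1 : R j i = -R i j := by
      have := congrFun (congrFun hR i) j
      simpa [Matrix.transpose_apply] using this
    simp [hRcdef, Matrix.conjTranspose_apply, Matrix.map_apply, h1]
  have hQc : ∀ s, ((Q s).map Complex.ofReal)ᴴ = (Q s).map Complex.ofReal := by
    intro s
    ext i j
    have h1 : Q s j i = Q s i j := by
      have := congrFun (congrFun (hQ s) i) j
      simpa [Matrix.transpose_apply] using this
    simp [Matrix.conjTranspose_apply, Matrix.map_apply, h1]
  -- matrix-level derivatives
  have hA' : ∀ s, HasDerivAt A (Complex.I • B s - (Rc * A s - A s * Rc)) s :=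
    fun s => matrix_hasDerivAt (hA s)
  have hB' : ∀ s, HasDerivAt B
      (Complex.I • ((Q s).map Complex.ofReal * A s) - (Rc * B s - B s * Rc)) s :=
    fun s => matrix_hasDerivAt (hB s)
  set F : ℝ → Matrix (Fin d) (Fin d) ℂ := fun s => (A s)ᴴ * B s + (B s)ᴴ * A s with hFdef
  have hF' : ∀ s, HasDerivAt F (F s * Rc - Rc * F s) s := by
    intro s
    have h1 := ((matrix_hasDerivAt_conjTranspose (hA' s)).mul (hB' s)).add
      ((matrix_hasDerivAt_conjTranspose (hB' s)).mul (hA' s))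
    refine h1.congr_deriv (Eq.symm ?_)
    simp only [Matrix.conjTranspose_sub, Matrix.conjTranspose_smul, Matrix.conjTranspose_mul,
      hRc, hQc s, Complex.star_def, Complex.conj_I, hFdef]
    simp only [mul_sub, sub_mul, mul_add, add_mul, smul_mul_assoc, mul_smul_comm,
      neg_smul, mul_neg, neg_mul, mul_assoc, smul_sub, smul_add]
    abel
  set E : ℝ → Matrix (Fin d) (Fin d) ℂ := fun s => NormedSpace.exp (s • Rc) with hEdef
  have hEd : ∀ s, HasDerivAt E (E s * Rc) s := fun s => hasDerivAt_exp_smul_const Rc s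
  have hcomm : ∀ s, E s * Rc = Rc * E s := fun s =>
    (((Commute.refl Rc).smul_left s).exp_left).eq
  have hG : ∀ s, HasDerivAt (fun u => E u * F u * E (-u)) 0 s := by
    intro s
    have hEneg : HasDerivAt (fun u : ℝ => E (-u)) (-(E (-s) * Rc)) s := by
      have h1 := HasDerivAt.scomp (𝕜 := ℝ) s (hasDerivAt_exp_smul_const Rc (-s))
        (hasDerivAt_neg s)
      exact h1.congr_deriv (by simp [hEdef]; rfl)
    have h1 := ((hEd s).mul (hF' s)).mul hEneg
    refine h1.congr_deriv (Eq.symm ?_)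
    have e2 : E (-s) * Rc = Rc * E (-s) := hcomm (-s)
    symm
    calc (E s * Rc * F s + E s * (F s * Rc - Rc * F s)) * E (-s)
          + E s * F s * -(E (-s) * Rc)
        = (E s * Rc) * (F s * E (-s)) + (E s * F s) * (Rc * E (-s))
          - (E s * Rc) * (F s * E (-s)) - (E s * F s) * (E (-s) * Rc) := by noncomm_ring
      _ = 0 := by rw [e2]; noncomm_ring
  have hconst := is_const_of_deriv_eq_zero (𝕜 := ℝ)
    (f := fun u => E u * F u * E (-u))
    (fun s => (hG s).differentiableAt) (fun s => (hG s).deriv) t 0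
  have hE0 : E 0 = 1 := by simp [hEdef, NormedSpace.exp_zero]
  have hF0 : F 0 = (2 : ℂ) • 1 := h0
  have hmul : E (-t) * E t = 1 := by
    have hc : Commute ((-t) • Rc) (t • Rc) := ((Commute.refl Rc).smul_left _).smul_right _
    have h2 := (Matrix.exp_add_of_commute ((-t) • Rc) (t • Rc) hc).symm
    rw [← add_smul, neg_add_cancel, zero_smul, NormedSpace.exp_zero] at h2
    exact h2
  have h2 : E t * F t * E (-t) = (2 : ℂ) • 1 := by
    rw [hconst, hE0, neg_zero, hE0, hF0]
    simp
  have hFt : F t = (2 : ℂ) • 1 := by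
    calc F t = (E (-t) * E t) * F t * (E (-t) * E t) := by rw [hmul]; simp
      _ = E (-t) * (E t * F t * E (-t)) * E t := by noncomm_ring
      _ = E (-t) * ((2 : ℂ) • 1) * E t := by rw [h2]
      _ = (2 : ℂ) • (E (-t) * E t) := by
          simp [mul_smul_comm, smul_mul_assoc]
      _ = (2 : ℂ) • 1 := by rw [hmul]
  have hFt' : (A t)ᴴ * B t + (B t)ᴴ * A t = (2 : ℂ) • 1 := hFt
  set a := A t with hadef
  set b := B t with hbdef
  have hadet : IsUnit a.det := hInv t
  have haH : IsUnit aᴴ.det := by rw [Matrix.det_conjTranspose]; exact hadet.star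
  have hinv1 : a * a⁻¹ = 1 := Matrix.mul_nonsing_inv a hadet
  have hinv2 : (aᴴ)⁻¹ * aᴴ = 1 := Matrix.nonsing_inv_mul _ haH
  have key : b * a⁻¹ + (b * a⁻¹)ᴴ = (2 : ℂ) • (a * aᴴ)⁻¹ := by
    have h3 : (b * a⁻¹)ᴴ = (aᴴ)⁻¹ * bᴴ := by
      rw [Matrix.conjTranspose_mul, Matrix.conjTranspose_nonsing_inv]
    have h4 : (aᴴ)⁻¹ * (aᴴ * b + bᴴ * a) * a⁻¹ = b * a⁻¹ + (aᴴ)⁻¹ * bᴴ := by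
      have hstep : (aᴴ)⁻¹ * (aᴴ * b + bᴴ * a) * a⁻¹
          = ((aᴴ)⁻¹ * aᴴ) * (b * a⁻¹) + ((aᴴ)⁻¹ * bᴴ) * (a * a⁻¹) := by noncomm_ring
      rw [hstep, hinv1, hinv2, Matrix.one_mul, Matrix.mul_one]
    rw [h3, ← h4, hFt', Matrix.mul_inv_rev]
    simp [mul_smul_comm, smul_mul_assoc]
  have hpart1 : (1 / 2 : ℂ) • (b * a⁻¹ + (b * a⁻¹)ᴴ) = (a * aᴴ)⁻¹ := by
    rw [key, smul_smul]
    norm_num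
  refine ⟨hpart1, ?_⟩
  rw [hpart1]
  have hps : (a * aᴴ).PosSemidef := Matrix.posSemidef_self_mul_conjTranspose a
  have hdet : IsUnit (a * aᴴ).det := by
    rw [Matrix.det_mul, Matrix.det_conjTranspose]
    exact hadet.mul hadet.star
  have hpd : (a * aᴴ).PosDef := by
    exact Matrix.PosDef.mul_conjTranspose_self a (Matrix.vecMul_injective_iff_isUnit.mpr
      ((Matrix.isUnit_iff_isUnit_det _).mpr hadet))
  exact hpd.inv
end
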